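/- Let Θ₁, Θ₂ ⊆ I be special and let τ ∈ ^{Θ₁∪Θ₁⊥}W^{Θ₂∪Θ₂⊥} (a minimal length double coset representative of W_{Θ₁∪Θ₁⊥}\W/W_{Θ₂∪Θ₂⊥}). Then the set Θ := Θ₁ ∪ Θ₂ ∪ red(τ) is a special subset of I; in particular τ ∈ W_{Θ^∞}. -/

import Mathlib

open scoped Pointwise

/-- A realization over `ℝ` of a generalized Cartan matrix `A = (a_{ij})_{i,j ∈ I}`.
The space `E` plays the role of `h_ℝ*`; `coroot i` is the linear functional
`λ ↦ λ(h_i)` of evaluation against the simple coroot `h_i`, and `root i` is the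
simple root `α_i ∈ h_ℝ*`. -/
structure GCMRealization where
  I : Type
  E : Type
  [fintypeI : Fintype I]
  [decEqI : DecidableEq I]
  [addCommGroupE : AddCommGroup E]
  [moduleE : Module ℝ E]
  [finiteDimensionalE : FiniteDimensional ℝ E]
  A : I → I → ℤ
  diag : ∀ i, A i i = 2
  offDiag_nonpos : ∀ i j, i ≠ j → A i j ≤ 0
  zero_iff : ∀ i j, A i j = 0 ↔ A j i = 0
  root : I → E
  coroot : I → E →ₗ[ℝ] ℝ
  root_indep : LinearIndependent ℝ root
  coroot_indep : LinearIndependent ℝ coroot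
  pairing : ∀ i j, coroot i (root j) = (A i j : ℝ)

attribute [instance] GCMRealization.fintypeI GCMRealization.decEqI
  GCMRealization.addCommGroupE GCMRealization.moduleE GCMRealization.finiteDimensionalE

namespace GCMRealization

variable (S : GCMRealization)

/-- The group of linear automorphisms of `E`, realized as units of the
endomorphism monoid. -/
abbrev U := (S.E →ₗ[ℝ] S.E)ˣ

/-- Application of a linear automorphism to a vector. -/
def ap (σ : S.U) (x : S.E) : S.E := σ.val x

/-- The simple reflection `σ_i : λ ↦ λ - λ(h_i) α_i` as a linear endomorphism. -/
def sMap (i : S.I) : S.E →ₗ[ℝ] S.E := LinearMap.id - (S.coroot i).smulRight (S.root i)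

lemma sMap_apply (i : S.I) (x : S.E) : S.sMap i x = x - S.coroot i x • S.root i := rfl

lemma sMap_sq (i : S.I) : S.sMap i * S.sMap i = 1 := by
  have h2 : S.coroot i (S.root i) = 2 := by
    rw [S.pairing, S.diag]; norm_num
  ext x
  rw [Module.End.mul_apply, Module.End.one_apply, sMap_apply, sMap_apply, map_sub, map_smul, h2,
    smul_eq_mul]
  have h3 : S.coroot i x - S.coroot i x * 2 = -(S.coroot i x) := by ring
  rw [h3, neg_smul, sub_neg_eq_add]
  abel

/-- The simple reflection `σ_i` as a linear automorphism. -/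
def sUnit (i : S.I) : S.U := ⟨S.sMap i, S.sMap i, S.sMap_sq i, S.sMap_sq i⟩

/-- The Weyl group `W`, generated by the simple reflections. -/
def W : Subgroup S.U := Subgroup.closure (Set.range S.sUnit)

/-- The standard parabolic subgroup `W_J`, generated by `{σ_i : i ∈ J}`. -/
def WJ (J : Set S.I) : Subgroup S.U := Subgroup.closure (S.sUnit '' J)

lemma WJ_le_W (J : Set S.I) : S.WJ J ≤ S.W :=
  Subgroup.closure_mono (Set.image_subset_range _ _)

lemma ap_mul (σ τ : S.U) (x : S.E) : S.ap (σ * τ) x = S.ap σ (S.ap τ x) := rfl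

lemma ap_one (x : S.E) : S.ap 1 x = x := rfl

/-- The closed fundamental chamber `C̄`. -/
def chamber : Set S.E := { x | ∀ i, 0 ≤ S.coroot i x }

/-- The Tits cone `X = W ⬝ C̄`. -/
def titsCone : Set S.E := { x | ∃ σ ∈ S.W, ∃ y ∈ S.chamber, x = S.ap σ y }

/-- The open facet `F_J` of type `J`. -/
def openFacet (J : Set S.I) : Set S.E :=
  { x | (∀ i ∈ J, S.coroot i x = 0) ∧ ∀ i, i ∉ J → 0 < S.coroot i x }

/-- The closed facet `F̄_J` of type `J`. -/
def closedFacet (J : Set S.I) : Set S.E :=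
  { x | (∀ i ∈ J, S.coroot i x = 0) ∧ ∀ i, i ∉ J → 0 ≤ S.coroot i x }

/-- A face of the Tits cone, in the sense of convex geometry: an extreme convex
subcone of the convex cone `X`. -/
def IsFace (F : Set S.E) : Prop :=
  Convex ℝ F ∧ (∀ c : ℝ, 0 ≤ c → ∀ x ∈ F, c • x ∈ F) ∧ IsExtreme ℝ S.titsCone F

/-- The set `Fa(X)` of faces of the Tits cone. -/
def faces : Set (Set S.E) := { F | S.IsFace F }

lemma faces_subset {F : Set S.E} (h : F ∈ S.faces) : F ⊆ S.titsCone := h.2.2.1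

/-- Two indices of `Θ` are linked if they are joined by an edge of the Coxeter
diagram of the submatrix `A_Θ`. -/
def connRel (Θ : Set S.I) (i j : S.I) : Prop := i ∈ Θ ∧ j ∈ Θ ∧ S.A i j ≠ 0

/-- The index set of the connected component of `i` in the submatrix `A_Θ`. -/
def component (Θ : Set S.I) (i : S.I) : Set S.I :=
  { j | j ∈ Θ ∧ Relation.ReflTransGen (S.connRel Θ) i j }

/-- A subset `K ⊆ I` is of finite type iff its Weyl group `W_K` is finite. -/
def finType (K : Set S.I) : Prop := Finite (S.WJ K)

/-- `Θ^∞`: the union of the index sets of the connected components of `A_Θ` of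
non-finite type. -/
def infpart (Θ : Set S.I) : Set S.I := { i | i ∈ Θ ∧ ¬ S.finType (S.component Θ i) }

/-- `Θ⁰`: the union of the index sets of the connected components of `A_Θ` of
finite type. -/
def finpart (Θ : Set S.I) : Set S.I := { i | i ∈ Θ ∧ S.finType (S.component Θ i) }

/-- `Θ` is special if `Θ = Θ^∞`. -/
def special (Θ : Set S.I) : Prop := S.infpart Θ = Θ

/-- `J⊥ = { i ∈ I : a_{ij} = 0 for all j ∈ J }`. -/
def perp (J : Set S.I) : Set S.I := { i | ∀ j ∈ J, S.A i j = 0 }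

/-- The special face `R(Θ) = W_{Θ⊥} ⬝ F̄_Θ` of the Tits cone. -/
def faceR (Θ : Set S.I) : Set S.E :=
  { x | ∃ σ ∈ S.WJ (S.perp Θ), ∃ y ∈ S.closedFacet Θ, x = S.ap σ y }

lemma closedFacet_subset_chamber (J : Set S.I) : S.closedFacet J ⊆ S.chamber := by
  intro x hx i
  by_cases hi : i ∈ J
  · exact le_of_eq (hx.1 i hi).symm
  · exact hx.2 i hi

lemma chamber_subset_titsCone : S.chamber ⊆ S.titsCone :=
  fun x hx => ⟨1, one_mem _, x, hx, rfl⟩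

lemma ap_mem_titsCone {σ : S.U} (hσ : σ ∈ S.W) {x : S.E} (hx : x ∈ S.titsCone) :
    S.ap σ x ∈ S.titsCone := by
  obtain ⟨τ, hτ, y, hy, rfl⟩ := hx
  exact ⟨σ * τ, mul_mem hσ hτ, y, hy, rfl⟩

lemma faceR_subset (Θ : Set S.I) : S.faceR Θ ⊆ S.titsCone := by
  rintro x ⟨σ, hσ, y, hy, rfl⟩
  exact S.ap_mem_titsCone (S.WJ_le_W _ hσ)
    (S.chamber_subset_titsCone (S.closedFacet_subset_chamber Θ hy))

/-- The product of the word `l` in the simple reflections. -/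
def wordProd (l : List S.I) : S.U := (l.map S.sUnit).prod

/-- The length of an element of the Weyl group: the length of a shortest
expression as a product of simple reflections. -/
noncomputable def length (σ : S.U) : ℕ :=
  sInf { n | ∃ l : List S.I, l.length = n ∧ S.wordProd l = σ }

/-- `l` is a reduced expression of `σ`. -/
def IsReduced (l : List S.I) (σ : S.U) : Prop :=
  S.wordProd l = σ ∧ l.length = S.length σ

/-- `red σ`: the set of indices of simple reflections occurring in a reduced
expression of `σ` (by a result of J. Tits this set does not depend on the
choice of reduced expression). -/
def red (σ : S.U) : Set S.I := { i | ∃ l : List S.I, S.IsReduced l σ ∧ i ∈ l }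

/-- `W^J`: the minimal length representatives of the cosets `W/W_J`. -/
def minRight (J : Set S.I) : Set S.U :=
  { σ | σ ∈ S.W ∧ ∀ τ ∈ S.WJ J, S.length σ ≤ S.length (σ * τ) }

/-- `^K W`: the minimal length representatives of the cosets `W_K\W`. -/
def minLeft (K : Set S.I) : Set S.U :=
  { σ | σ ∈ S.W ∧ ∀ κ ∈ S.WJ K, S.length σ ≤ S.length (κ * σ) }

/-- `^K W^J`: the minimal length representatives of the double cosets
`W_K\W/W_J`. -/
def minDouble (K J : Set S.I) : Set S.U :=
  { σ | σ ∈ S.W ∧ ∀ κ ∈ S.WJ K, ∀ τ ∈ S.WJ J, S.length σ ≤ S.length (κ * σ * τ) }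

/-- `(W_L)^{J'}`: the minimal length representatives within `W_L` of the cosets
`W_L/W_{J'}`. -/
def minRightIn (L J' : Set S.I) : Set S.U :=
  { σ | σ ∈ S.WJ L ∧ ∀ τ ∈ S.WJ J', S.length σ ≤ S.length (σ * τ) }

/-- Pairs `(σ, R)` with `σ ∈ W` and `R ⊆ X`, the raw material for the face
monoid: `(σ, R)` represents the element `σ ε(R)`. -/
structure PreHat (S : GCMRealization) where
  w : S.W
  carrier : Set S.E
  subX : carrier ⊆ S.titsCone

lemma PreHat.ext' : ∀ {p q : S.PreHat}, p.w = q.w → p.carrier = q.carrier → p = q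
  | ⟨_, _, _⟩, ⟨_, _, _⟩, h1, h2 => by cases h1; cases h2; rfl

instance : One S.PreHat := ⟨⟨1, S.titsCone, subset_rfl⟩⟩

/-- The semidirect product multiplication `(σ, R)(τ, T) = (στ, τ⁻¹R ∩ T)`. -/
instance : Mul S.PreHat :=
  ⟨fun p q => ⟨p.w * q.w, S.ap ↑q.w ⁻¹' p.carrier ∩ q.carrier,
    fun _ hx => q.subX hx.2⟩⟩

lemma PreHat.mul_w (p q : S.PreHat) : (p * q).w = p.w * q.w := rfl

lemma PreHat.mul_carrier (p q : S.PreHat) :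
    (p * q).carrier = S.ap ↑q.w ⁻¹' p.carrier ∩ q.carrier := rfl

lemma PreHat.one_w : (1 : S.PreHat).w = 1 := rfl

lemma PreHat.one_carrier : (1 : S.PreHat).carrier = S.titsCone := rfl

instance : Monoid S.PreHat where
  mul_assoc p q r := by
    refine PreHat.ext' S (mul_assoc _ _ _) ?_
    ext x
    simp only [PreHat.mul_carrier, PreHat.mul_w, Set.mem_inter_iff, Set.mem_preimage,
      Subgroup.coe_mul, S.ap_mul]
    tauto
  one_mul p := by
    refine PreHat.ext' S (one_mul _) ?_
    ext x
    simp only [PreHat.mul_carrier, PreHat.one_carrier, Set.mem_inter_iff, Set.mem_preimage]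
    exact ⟨fun h => h.2, fun h => ⟨S.ap_mem_titsCone p.w.2 (p.subX h), h⟩⟩
  mul_one p := by
    refine PreHat.ext' S (mul_one _) ?_
    ext x
    simp only [PreHat.mul_carrier, PreHat.one_carrier, Set.mem_inter_iff, Set.mem_preimage,
      OneMemClass.coe_one, S.ap_one]
    exact ⟨fun h => h.1, fun h => ⟨h, p.subX h⟩⟩

/-- The congruence relation `σ ε(R) = σ' ε(R') ⟺ R = R'` and `σ⁻¹σ'` fixes `R`
pointwise. -/
def hatCon : Con S.PreHat where
  r p q := p.carrier = q.carrier ∧ ∀ x ∈ p.carrier, S.ap ↑p.w x = S.ap ↑q.w x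
  iseqv :=
    { refl := fun p => ⟨rfl, fun _ _ => rfl⟩
      symm := fun {p q} h => ⟨h.1.symm, fun x hx => (h.2 x (h.1 ▸ hx)).symm⟩
      trans := fun {p q r} h h' =>
        ⟨h.1.trans h'.1, fun x hx => (h.2 x hx).trans (h'.2 x (h.1 ▸ hx))⟩ }
  mul' := by
    rintro p p' q q' ⟨hc, hw⟩ ⟨hc', hw'⟩
    constructor
    · ext x
      simp only [PreHat.mul_carrier, Set.mem_inter_iff, Set.mem_preimage]
      constructor
      · rintro ⟨h1, h2⟩
        exact ⟨by rw [← hw' x h2, ← hc]; exact h1, hc' ▸ h2⟩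
      · rintro ⟨h1, h2⟩
        have h2' : x ∈ q.carrier := hc' ▸ h2
        exact ⟨by rw [hc, hw' x h2']; exact h1, h2'⟩
    · rintro x ⟨h1, h2⟩
      simp only [PreHat.mul_w, Subgroup.coe_mul, S.ap_mul]
      rw [hw _ h1, hw' x h2]

/-- The monoid in which the face monoid `Ŵ` lives: the quotient of the
semidirect product by the congruence. -/
def FM := S.hatCon.Quotient

noncomputable instance : Monoid S.FM := by unfold FM; infer_instance

/-- The class of the pair `(σ, R)` in the quotient. -/
def fmk (p : S.PreHat) : S.FM := S.hatCon.mk' p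

/-- The element `σ = σ ε(X)` of the face monoid. -/
def wEl (σ : S.W) : S.FM := S.fmk ⟨σ, S.titsCone, subset_rfl⟩

/-- The idempotent `ε(R)` for `R ⊆ X`. -/
def eps (R : Set S.E) (h : R ⊆ S.titsCone) : S.FM := S.fmk ⟨1, R, h⟩

/-- The idempotent `ε(R(Θ))`. -/
def faceEl (Θ : Set S.I) : S.FM := S.eps (S.faceR Θ) (S.faceR_subset Θ)

/-- The element `σ ε(R)` of the face monoid. -/
def genEl (σ : S.W) (R : Set S.E) (h : R ⊆ S.titsCone) : S.FM := S.fmk ⟨σ, R, h⟩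

/-- The image of the Weyl group `W` in the face monoid. -/
def Wset : Set S.FM := Set.range S.wEl

/-- The set `E = {ε(R) : R ∈ Fa(X)}` of idempotents of the face monoid. -/
def Eset : Set S.FM := { x | ∃ R, ∃ h : R ∈ S.faces, x = S.eps R (S.faces_subset h) }

/-- The face monoid `Ŵ` associated to the Weyl group `W`: the submonoid
generated by `W` and the idempotents `ε(R)`, `R` a face of the Tits cone;
its elements are exactly the `σ ε(R)` with `σ ∈ W` and `R ∈ Fa(X)`. -/
noncomputable def hatW : Submonoid S.FM := Submonoid.closure (S.Wset ∪ S.Eset)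

/-- The image of the parabolic subgroup `W_J` in the face monoid. -/
def WJset (J : Set S.I) : Set S.FM :=
  { x | ∃ σ, ∃ h : σ ∈ S.WJ J, x = S.wEl ⟨σ, S.WJ_le_W J h⟩ }

/-- The set `E_J = {ε(R) : R ∈ Fa(X), R ⊇ R(J^∞)}`. -/
def EJset (J : Set S.I) : Set S.FM :=
  { x | ∃ R, ∃ h : R ∈ S.faces, S.faceR (S.infpart J) ⊆ R ∧ x = S.eps R (S.faces_subset h) }

/-- The standard parabolic submonoid `Ŵ_J = W_J ⬝ E_J` of the face monoid. -/
def hatWJ (J : Set S.I) : Set S.FM := S.WJset J * S.EJset J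

/-- The coset `σ W_J`, an element of the Coxeter complex. -/
def coset (σ : S.U) (J : Set S.I) : Set S.U := { τ | ∃ w ∈ S.WJ J, τ = σ * w }

/-- The Coxeter complex `C = {σ W_J : σ ∈ W, J ⊆ I}`, partially ordered by
reverse inclusion. -/
def Cox : Set (Set S.U) := { c | ∃ σ ∈ S.W, ∃ J : Set S.I, c = S.coset σ J }

/-- Left translation, giving the action of `W` on the Coxeter complex. -/
def lmul (σ : S.U) (c : Set S.U) : Set S.U := (fun τ => σ * τ) '' c

/-- `W_Θ↓ = {V ∈ C : V ≤ W_Θ} = {V ∈ C : V ⊇ W_Θ}`. -/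
def downW (Θ : Set S.I) : Set (Set S.U) := { V | V ∈ S.Cox ∧ S.coset 1 Θ ⊆ V }

/-- The set of cosets `W_{Θ⊥} ⬝ (W_Θ↓)`. -/
def dSet (Θ : Set S.I) : Set (Set S.U) :=
  { c | ∃ a ∈ S.WJ (S.perp Θ), ∃ V ∈ S.downW Θ, c = S.lmul a V }

end GCMRealization

/-! A component of `Θ = Θ₁ ∪ Θ₂ ∪ red τ` meeting the special set `Θ₁` or `Θ₂` contains a component
of non-finite type, so it is not of finite type itself. A component `C` avoiding `Θ₁ ∪ Θ₂` lies in
`red τ` and is orthogonal both to `Θ₁` and to the rest of `Θ`. Hence the letters from `C` of a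
reduced word of `τ` commute with the other letters and can be pulled to the left, where they form
an element of `W_{Θ₁⊥}`; removing it shortens `τ` without leaving its coset `W_{Θ₁ ∪ Θ₁⊥} τ`,
against the minimality of `τ`. -/

theorem List.prod_map_eq_prod_map_filter_mul {α M : Type*} [Monoid M] (f : α → M)
    (p : α → Bool) (l : List α)
    (hcomm : ∀ a ∈ l, ∀ b ∈ l, p a → p b = false → Commute (f a) (f b)) :
    (l.map f).prod = ((l.filter p).map f).prod * ((l.filter (fun a => !p a)).map f).prod := by
  induction l with
  | nil => simp
  | cons a l ih =>
    have ih := ih fun x hx y hy => hcomm x (mem_cons_of_mem _ hx) y (mem_cons_of_mem _ hy)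
    cases ha : p a
    · have hcomm_a : Commute (f a) ((l.filter p).map f).prod := by
        refine Commute.list_prod_right _ _ fun y hy => ?_
        obtain ⟨b, hb, rfl⟩ := mem_map.1 hy
        rw [mem_filter] at hb
        exact (hcomm b (mem_cons_of_mem _ hb.1) a mem_cons_self hb.2 ha).symm
      simp [ha, ih, ← mul_assoc, hcomm_a.eq]
    · simp [ha, ih, mul_assoc]

namespace GCMRealization

variable (S : GCMRealization)

instance (Θ : Set S.I) : Std.Symm (S.connRel Θ) :=
  ⟨fun _ _ h => ⟨h.2.1, h.1, fun hz => h.2.2 ((S.zero_iff _ _).mp hz)⟩⟩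

lemma wordProd_cons (a : S.I) (l : List S.I) :
    S.wordProd (a :: l) = S.sUnit a * S.wordProd l := List.prod_cons

lemma wordProd_append (l m : List S.I) :
    S.wordProd (l ++ m) = S.wordProd l * S.wordProd m := by
  simp [wordProd]

lemma sUnit_inv (a : S.I) : (S.sUnit a)⁻¹ = S.sUnit a :=
  inv_eq_of_mul_eq_one_right (Units.ext (S.sMap_sq a))

lemma wordProd_reverse (l : List S.I) : S.wordProd l.reverse = (S.wordProd l)⁻¹ := by
  induction l with
  | nil => simp [wordProd]
  | cons a l ih =>
    rw [List.reverse_cons, wordProd_append, ih, S.wordProd_cons a l, mul_inv_rev, S.sUnit_inv]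
    simp [wordProd]

lemma sUnit_commute {i j : S.I} (hij : S.A i j = 0) : Commute (S.sUnit i) (S.sUnit j) := by
  have hc : S.coroot i (S.root j) = 0 := by rw [S.pairing, hij]; norm_num
  have hc' : S.coroot j (S.root i) = 0 := by rw [S.pairing, (S.zero_iff i j).mp hij]; norm_num
  refine Units.ext (LinearMap.ext fun x => ?_)
  simp only [Units.val_mul, Module.End.mul_apply, sUnit, sMap_apply, map_sub, map_smul, hc, hc',
    zero_smul, sub_zero]
  abel

variable {S}

lemma mem_component_self {Θ : Set S.I} {i : S.I} (hi : i ∈ Θ) : i ∈ S.component Θ i :=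
  ⟨hi, .refl⟩

lemma component_eq_of_mem {Θ : Set S.I} {i j : S.I} (hj : j ∈ S.component Θ i) :
    S.component Θ j = S.component Θ i := by
  ext k
  exact ⟨fun hk => ⟨hk.1, hj.2.trans hk.2⟩,
    fun hk => ⟨hk.1, (Std.Symm.symm _ _ hj.2).trans hk.2⟩⟩

lemma A_eq_zero_of_mem_component {Θ : Set S.I} {i c j : S.I} (hc : c ∈ S.component Θ i)
    (hj : j ∈ Θ) (hjc : j ∉ S.component Θ i) : S.A c j = 0 := by
  by_contra hne
  rw [← component_eq_of_mem hc] at hjc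
  exact hjc ⟨hj, .single ⟨hc.1, hj, hne⟩⟩

lemma component_mono {Θ Θ' : Set S.I} (h : Θ ⊆ Θ') (i : S.I) :
    S.component Θ i ⊆ S.component Θ' i := fun _ hk =>
  ⟨h hk.1, Relation.ReflTransGen.mono (fun _ _ hab => ⟨h hab.1, h hab.2.1, hab.2.2⟩) _ _ hk.2⟩

lemma WJ_mono {K K' : Set S.I} (h : K ⊆ K') : S.WJ K ≤ S.WJ K' :=
  Subgroup.closure_mono (Set.image_mono h)

lemma finType_mono {K K' : Set S.I} (h : K ⊆ K') (hK' : S.finType K') : S.finType K :=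
  @Finite.of_injective _ _ hK' _ (Subgroup.inclusion_injective (WJ_mono h))

lemma special_iff {Θ : Set S.I} : S.special Θ ↔ ∀ i ∈ Θ, ¬ S.finType (S.component Θ i) := by
  simp only [special, infpart, Set.ext_iff, Set.mem_ofPred_eq]
  exact ⟨fun h i hi => ((h i).2 hi).2, fun h i => ⟨And.left, fun hi => ⟨hi, h i hi⟩⟩⟩

lemma not_finType_component_of_mem_special {Θ Θ' : Set S.I} (hΘ' : S.special Θ') (h : Θ' ⊆ Θ)
    {i j : S.I} (hj : j ∈ S.component Θ i) (hjΘ' : j ∈ Θ') :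
    ¬ S.finType (S.component Θ i) := fun hfin =>
  special_iff.1 hΘ' j hjΘ' <|
    finType_mono ((component_mono h j).trans (component_eq_of_mem hj).le) hfin

lemma exists_wordProd_eq {σ : S.U} (h : σ ∈ S.W) : ∃ l : List S.I, S.wordProd l = σ := by
  induction h using Subgroup.closure_induction with
  | mem x hx =>
    obtain ⟨i, rfl⟩ := hx
    exact ⟨[i], by simp [wordProd]⟩
  | one => exact ⟨[], rfl⟩
  | mul x y _ _ ihx ihy =>
    obtain ⟨l, rfl⟩ := ihx
    obtain ⟨m, rfl⟩ := ihy
    exact ⟨l ++ m, S.wordProd_append l m⟩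
  | inv x _ ihx =>
    obtain ⟨l, rfl⟩ := ihx
    exact ⟨l.reverse, S.wordProd_reverse l⟩

lemma length_le_of_wordProd_eq {σ : S.U} {l : List S.I} (h : S.wordProd l = σ) :
    S.length σ ≤ l.length :=
  Nat.sInf_le ⟨l, rfl, h⟩

lemma exists_isReduced {σ : S.U} (h : σ ∈ S.W) : ∃ l : List S.I, S.IsReduced l σ := by
  obtain ⟨l, hl⟩ := exists_wordProd_eq h
  obtain ⟨l', hlen, hl'⟩ := Nat.sInf_mem (⟨l.length, l, rfl, hl⟩ :
    {n | ∃ l : List S.I, l.length = n ∧ S.wordProd l = σ}.Nonempty)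
  exact ⟨l', hl', hlen⟩

lemma wordProd_mem_WJ {J : Set S.I} {l : List S.I} (h : ∀ a ∈ l, a ∈ J) :
    S.wordProd l ∈ S.WJ J := by
  refine list_prod_mem fun _ hx => ?_
  obtain ⟨a, ha, rfl⟩ := List.mem_map.1 hx
  exact Subgroup.subset_closure ⟨a, h a ha, rfl⟩

lemma mem_WJ_red {σ : S.U} (h : σ ∈ S.W) : σ ∈ S.WJ (S.red σ) := by
  obtain ⟨l, hl⟩ := exists_isReduced h
  have hl_mem : S.wordProd l ∈ S.WJ (S.red σ) := wordProd_mem_WJ fun a ha => ⟨l, hl, ha⟩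
  rwa [hl.1] at hl_mem

lemma minDouble_subset_minLeft (K J : Set S.I) : S.minDouble K J ⊆ S.minLeft K :=
  fun _ hτ => ⟨hτ.1, fun κ hκ => by simpa using hτ.2 κ hκ 1 (one_mem _)⟩

lemma notMem_of_isReduced_of_mem_minLeft {K C : Set S.I} {τ : S.U} {l : List S.I}
    (hτ : τ ∈ S.minLeft K) (hl : S.IsReduced l τ) (hCK : C ⊆ K)
    (hC : ∀ a ∈ l, ∀ b ∈ l, a ∈ C → b ∉ C → S.A a b = 0) {a : S.I} (ha : a ∈ l) : a ∉ C := by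
  classical
  set lC := l.filter (fun b => decide (b ∈ C))
  set lN := l.filter (fun b => !decide (b ∈ C))
  have hsplit : τ = S.wordProd lC * S.wordProd lN := by
    rw [← hl.1]
    refine List.prod_map_eq_prod_map_filter_mul _ _ l fun a ha b hb haC hbC => S.sUnit_commute ?_
    exact hC a ha b hb (of_decide_eq_true haC) (of_decide_eq_false hbC)
  have hlC : S.wordProd lC ∈ S.WJ K :=
    wordProd_mem_WJ fun b hb => hCK (of_decide_eq_true (List.mem_filter.1 hb).2)
  have hN : (S.wordProd lC)⁻¹ * τ = S.wordProd lN := by rw [hsplit, inv_mul_cancel_left]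
  have hmin := hτ.2 _ (inv_mem hlC)
  rw [hN] at hmin
  have hlC_nil : lC = [] := by
    have hlen : l.length = lC.length + lN.length := List.length_eq_length_filter_add _
    have := length_le_of_wordProd_eq (rfl : S.wordProd lN = _)
    have := hl.2
    exact List.eq_nil_of_length_eq_zero (by omega)
  exact fun haC => List.ne_nil_of_mem (List.mem_filter.2 ⟨ha, decide_eq_true haC⟩) hlC_nil

lemma exists_mem_component_of_mem_red {Θ Θ' : Set S.I} {τ : S.U}
    (hτ : τ ∈ S.minLeft (Θ' ∪ S.perp Θ')) (hΘ' : Θ' ⊆ Θ) (hred : S.red τ ⊆ Θ) {i : S.I}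
    (hi : i ∈ S.red τ) : ∃ j ∈ S.component Θ i, j ∈ Θ' := by
  by_contra! hdisj
  obtain ⟨l, hl, hil⟩ := hi
  have hperp : S.component Θ i ⊆ Θ' ∪ S.perp Θ' := fun c hc =>
    Or.inr fun j hj => A_eq_zero_of_mem_component hc (hΘ' hj) (fun hjc => hdisj j hjc hj)
  refine notMem_of_isReduced_of_mem_minLeft hτ hl hperp (fun a _ b hb ha hb' => ?_) hil
    (mem_component_self (hred ⟨l, hl, hil⟩))
  exact A_eq_zero_of_mem_component ha (hred ⟨l, hl, hb⟩) hb'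

/-- For special `Θ₁, Θ₂ ⊆ I` and a minimal length double coset
representative `τ ∈ ^{Θ₁∪Θ₁⊥}W^{Θ₂∪Θ₂⊥}`, the set `Θ = Θ₁ ∪ Θ₂ ∪ red(τ)` is
special; in particular `τ ∈ W_{Θ^∞}`. -/
theorem union_red_special (S : GCMRealization) (Θ₁ Θ₂ : Set S.I)
    (h1 : S.special Θ₁) (h2 : S.special Θ₂) (τ : S.U)
    (hτ : τ ∈ S.minDouble (Θ₁ ∪ S.perp Θ₁) (Θ₂ ∪ S.perp Θ₂)) :
    S.special (Θ₁ ∪ Θ₂ ∪ S.red τ) ∧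
    τ ∈ S.WJ (S.infpart (Θ₁ ∪ Θ₂ ∪ S.red τ)) := by
  have hΘ₁ : Θ₁ ⊆ Θ₁ ∪ Θ₂ ∪ S.red τ := fun _ h => .inl (.inl h)
  have hΘ₂ : Θ₂ ⊆ Θ₁ ∪ Θ₂ ∪ S.red τ := fun _ h => .inl (.inr h)
  have hred : S.red τ ⊆ Θ₁ ∪ Θ₂ ∪ S.red τ := fun _ h => .inr h
  have hspecial : S.special (Θ₁ ∪ Θ₂ ∪ S.red τ) := by
    refine special_iff.2 fun i hi => ?_
    rcases hi with (hi | hi) | hi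
    · exact not_finType_component_of_mem_special h1 hΘ₁ (mem_component_self (hΘ₁ hi)) hi
    · exact not_finType_component_of_mem_special h2 hΘ₂ (mem_component_self (hΘ₂ hi)) hi
    · obtain ⟨j, hj, hjΘ₁⟩ :=
        exists_mem_component_of_mem_red (minDouble_subset_minLeft _ _ hτ) hΘ₁ hred hi
      exact not_finType_component_of_mem_special h1 hΘ₁ hj hjΘ₁
  refine ⟨hspecial, ?_⟩
  rw [hspecial]
  exact WJ_mono hred (mem_WJ_red hτ.1)

end GCMRealization
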